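/- Decomposition of the Neumann Hamiltonian by the integrals: (i) for all (x,y) ∈ ℝ^{n+1} × ℝ^{n+1}, ∑_{σ=0}^{ℓ} F_σ(x,y) = ⟨x,x⟩; (ii) at every point with ⟨x,x⟩ = 1 and ⟨x,y⟩ = 0, the Neumann Hamiltonian satisfies H(x,y) = ½ ∑_{σ=0}^{ℓ} ( b_σ·F_σ(x,y) + W_σ(x,y) ). -/
import Mathlib


noncomputable section

open scoped Classical

/-- The angular momentum component `L_{νκ}(x,y) = x_ν y_κ − x_κ y_ν`. -/
def Lfun {N : ℕ} (ν κ : Fin N) (p : (Fin N → ℝ) × (Fin N → ℝ)) : ℝ :=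
  p.1 ν * p.2 κ - p.1 κ * p.2 ν

/-- The integral `F_σ = ∑_{i∈I_σ} x_i² + ∑_{τ≠σ} ∑_{k∈I_σ} ∑_{l∈I_τ} L_{kl}²/(b_σ − b_τ)`
of the degenerate Neumann system, where `I_σ = {ν : a_ν = b_σ}`. -/
def Fint {n ℓ : ℕ} (a : Fin (n + 1) → ℝ) (b : Fin (ℓ + 1) → ℝ) (σ : Fin (ℓ + 1))
    (p : (Fin (n + 1) → ℝ) × (Fin (n + 1) → ℝ)) : ℝ :=
  (∑ i : Fin (n + 1), if a i = b σ then (p.1 i) ^ 2 else 0)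
    + ∑ τ : Fin (ℓ + 1), if τ ≠ σ then
        ∑ k : Fin (n + 1), ∑ l : Fin (n + 1),
          (if a k = b σ ∧ a l = b τ then (Lfun k l p) ^ 2 / (b σ - b τ) else 0)
      else 0

/-- `W_σ = ∑_{i<k, i,k∈I_σ} L_{ik}²`. -/
def Wfun {n ℓ : ℕ} (a : Fin (n + 1) → ℝ) (b : Fin (ℓ + 1) → ℝ) (σ : Fin (ℓ + 1))
    (p : (Fin (n + 1) → ℝ) × (Fin (n + 1) → ℝ)) : ℝ :=
  ∑ i : Fin (n + 1), ∑ k : Fin (n + 1),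
    if a i = b σ ∧ a k = b σ ∧ i < k then (Lfun i k p) ^ 2 else 0

/-- The Neumann Hamiltonian `H(x,y) = ½⟨y,y⟩ + ½ ∑_ν a_ν x_ν²`. -/
def neumannH {n : ℕ} (a : Fin (n + 1) → ℝ)
    (p : (Fin (n + 1) → ℝ) × (Fin (n + 1) → ℝ)) : ℝ :=
  (1 / 2) * (∑ ν, (p.2 ν) ^ 2) + (1 / 2) * ∑ ν, a ν * (p.1 ν) ^ 2

private lemma sum_comm3 {M : Type*} [AddCommMonoid M] {α β γ : Type*}
    [Fintype α] [Fintype β] [Fintype γ] (f : α → β → γ → M) :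
    ∑ a, ∑ b, ∑ c, f a b c = ∑ b, ∑ c, ∑ a, f a b c := by
  rw [Finset.sum_comm]
  exact Finset.sum_congr rfl fun b _ => Finset.sum_comm

private lemma sum_comm4 {M : Type*} [AddCommMonoid M] {α β γ δ : Type*}
    [Fintype α] [Fintype β] [Fintype γ] [Fintype δ] (f : α → β → γ → δ → M) :
    ∑ a, ∑ b, ∑ c, ∑ d, f a b c d = ∑ c, ∑ d, ∑ a, ∑ b, f a b c d := by
  calc ∑ a, ∑ b, ∑ c, ∑ d, f a b c d
      = ∑ a, ∑ c, ∑ b, ∑ d, f a b c d := Finset.sum_congr rfl fun a _ => Finset.sum_comm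
    _ = ∑ c, ∑ a, ∑ b, ∑ d, f a b c d := Finset.sum_comm
    _ = ∑ c, ∑ a, ∑ d, ∑ b, f a b c d :=
        Finset.sum_congr rfl fun c _ => Finset.sum_congr rfl fun a _ => Finset.sum_comm
    _ = ∑ c, ∑ d, ∑ a, ∑ b, f a b c d := Finset.sum_congr rfl fun c _ => Finset.sum_comm

private lemma swap_pairs {M : Type*} [AddCommMonoid M] {α β : Type*} [Fintype α] [Fintype β]
    (f : α → α → β → β → M) :
    ∑ s, ∑ t, ∑ k, ∑ l, f s t k l = ∑ s, ∑ t, ∑ k, ∑ l, f t s l k := by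
  rw [Finset.sum_comm]
  exact Finset.sum_congr rfl fun t _ => Finset.sum_congr rfl fun s _ => Finset.sum_comm

private lemma lagrange {N : ℕ} (x y : Fin N → ℝ) :
    ∑ i, ∑ j, (x i * y j - x j * y i) ^ 2
      = 2 * ((∑ i, x i * x i) * (∑ i, y i * y i) - (∑ i, x i * y i) ^ 2) := by
  have h1 : ∀ i j : Fin N, (x i * y j - x j * y i) ^ 2
      = (x i * x i) * (y j * y j) + (x j * x j) * (y i * y i)
        - 2 * ((x i * y i) * (x j * y j)) := fun i j => by ring
  calc ∑ i, ∑ j, (x i * y j - x j * y i) ^ 2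
      = ∑ i, ∑ j, ((x i * x i) * (y j * y j) + (x j * x j) * (y i * y i)
          - 2 * ((x i * y i) * (x j * y j))) := by simp_rw [h1]
    _ = _ := by
        simp only [Finset.sum_sub_distrib, Finset.sum_add_distrib, ← Finset.mul_sum,
          ← Finset.sum_mul]
        ring


/-- **Decomposition of the Neumann Hamiltonian by the integrals.**
(i) `∑_σ F_σ(x,y) = ⟨x,x⟩` everywhere; (ii) on `⟨x,x⟩ = 1`, `⟨x,y⟩ = 0` the Neumann
Hamiltonian satisfies `H = ½ ∑_σ (b_σ F_σ + W_σ)`. -/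
theorem stmt10 (n ℓ : ℕ) (a : Fin (n + 1) → ℝ) (b : Fin (ℓ + 1) → ℝ)
    (hb : StrictMono b)
    (hab : ∀ ν, ∃ σ, a ν = b σ) (hba : ∀ σ, ∃ ν, a ν = b σ) :
    (∀ p : (Fin (n + 1) → ℝ) × (Fin (n + 1) → ℝ),
      ∑ σ, Fint a b σ p = ∑ ν, p.1 ν * p.1 ν) ∧
    (∀ p : (Fin (n + 1) → ℝ) × (Fin (n + 1) → ℝ),
      (∑ ν, p.1 ν * p.1 ν) = 1 → (∑ ν, p.1 ν * p.2 ν) = 0 →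
      neumannH a p = (1 / 2) * ∑ σ, (b σ * Fint a b σ p + Wfun a b σ p)) := by
  have hbinj : Function.Injective b := hb.injective
  have huniq : ∀ (c : ℝ) (σ₀ : Fin (ℓ + 1)), c = b σ₀ → ∀ f : Fin (ℓ + 1) → ℝ,
      (∑ σ, if c = b σ then f σ else 0) = f σ₀ := by
    intro c σ₀ hc f
    rw [Finset.sum_eq_single σ₀]
    · rw [if_pos hc]
    · intro σ _ hσ
      exact if_neg fun h => hσ (hbinj (h.symm.trans hc))
    · intro h; exact absurd (Finset.mem_univ σ₀) h
  -- normalization of the second piece of Fint (possibly multiplied by a scalar m)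
  have hBnorm : ∀ (m : ℝ) (p : (Fin (n + 1) → ℝ) × (Fin (n + 1) → ℝ)) (σ : Fin (ℓ + 1)),
      m * (∑ τ : Fin (ℓ + 1), if τ ≠ σ then
        ∑ k : Fin (n + 1), ∑ l : Fin (n + 1),
          (if a k = b σ ∧ a l = b τ then (Lfun k l p) ^ 2 / (b σ - b τ) else 0) else 0)
      = ∑ τ : Fin (ℓ + 1), ∑ k : Fin (n + 1), ∑ l : Fin (n + 1),
          (if τ ≠ σ ∧ a k = b σ ∧ a l = b τ then
            m * ((Lfun k l p) ^ 2 / (b σ - b τ)) else 0) := by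
    intro m p σ
    rw [Finset.mul_sum]
    refine Finset.sum_congr rfl fun τ _ => ?_
    by_cases h : τ = σ
    · simp [h]
    · simp [h, Finset.mul_sum, mul_ite, mul_zero]
  constructor
  · -- part (i)
    intro p
    simp only [Fint]
    rw [Finset.sum_add_distrib]
    have hA : (∑ σ, ∑ i, if a i = b σ then (p.1 i) ^ 2 else 0) = ∑ ν, p.1 ν * p.1 ν := by
      rw [Finset.sum_comm]
      refine Finset.sum_congr rfl fun i _ => ?_
      obtain ⟨σ₀, hσ₀⟩ := hab i
      rw [huniq _ σ₀ hσ₀ (fun _ => (p.1 i) ^ 2), sq]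
    have hB : (∑ σ : Fin (ℓ + 1), ∑ τ : Fin (ℓ + 1), if τ ≠ σ then
        ∑ k : Fin (n + 1), ∑ l : Fin (n + 1),
          (if a k = b σ ∧ a l = b τ then (Lfun k l p) ^ 2 / (b σ - b τ) else 0) else 0) = 0 := by
      have hn : (∑ σ : Fin (ℓ + 1), ∑ τ : Fin (ℓ + 1), if τ ≠ σ then
          ∑ k : Fin (n + 1), ∑ l : Fin (n + 1),
            (if a k = b σ ∧ a l = b τ then (Lfun k l p) ^ 2 / (b σ - b τ) else 0) else 0)
          = ∑ σ : Fin (ℓ + 1), ∑ τ : Fin (ℓ + 1), ∑ k : Fin (n + 1), ∑ l : Fin (n + 1),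
            (if τ ≠ σ ∧ a k = b σ ∧ a l = b τ then (Lfun k l p) ^ 2 / (b σ - b τ) else 0) := by
        refine Finset.sum_congr rfl fun σ _ => ?_
        have := hBnorm 1 p σ
        simpa using this
      rw [hn]
      set S : ℝ := ∑ σ : Fin (ℓ + 1), ∑ τ : Fin (ℓ + 1), ∑ k : Fin (n + 1), ∑ l : Fin (n + 1),
        (if τ ≠ σ ∧ a k = b σ ∧ a l = b τ then (Lfun k l p) ^ 2 / (b σ - b τ) else 0) with hS
      have hSneg : S = -S := by
        nth_rewrite 1 [hS, swap_pairs (f := fun s t k l =>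
          if t ≠ s ∧ a k = b s ∧ a l = b t then (Lfun k l p) ^ 2 / (b s - b t) else 0)]
        rw [hS]
        simp only [← Finset.sum_neg_distrib]
        refine Finset.sum_congr rfl fun σ _ => Finset.sum_congr rfl fun τ _ =>
          Finset.sum_congr rfl fun k _ => Finset.sum_congr rfl fun l _ => ?_
        by_cases h : τ ≠ σ ∧ a k = b σ ∧ a l = b τ
        · rw [if_pos ⟨h.1.symm, h.2.2, h.2.1⟩, if_pos h]
          have hL : Lfun l k p = -Lfun k l p := by simp only [Lfun]; ring
          rw [hL, neg_sq, show b τ - b σ = -(b σ - b τ) by ring, div_neg]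
        · rw [if_neg (fun h' => h ⟨h'.1.symm, h'.2.2, h'.2.1⟩), if_neg h, neg_zero]
      linarith
    rw [hA, hB, add_zero]
  · -- part (ii)
    intro p hX hZ
    have hbA : (∑ σ, b σ * ∑ i, if a i = b σ then (p.1 i) ^ 2 else 0)
        = ∑ ν, a ν * (p.1 ν) ^ 2 := by
      simp_rw [Finset.mul_sum, mul_ite, mul_zero]
      rw [Finset.sum_comm]
      refine Finset.sum_congr rfl fun i _ => ?_
      obtain ⟨σ₀, hσ₀⟩ := hab i
      rw [huniq _ σ₀ hσ₀ (fun σ => b σ * (p.1 i) ^ 2), ← hσ₀]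
    -- C with multiplier b σ
    have h2C : (∑ σ : Fin (ℓ + 1), ∑ τ : Fin (ℓ + 1), ∑ k : Fin (n + 1), ∑ l : Fin (n + 1),
          (if τ ≠ σ ∧ a k = b σ ∧ a l = b τ then b σ * ((Lfun k l p) ^ 2 / (b σ - b τ)) else 0))
        + (∑ σ : Fin (ℓ + 1), ∑ τ : Fin (ℓ + 1), ∑ k : Fin (n + 1), ∑ l : Fin (n + 1),
          (if τ ≠ σ ∧ a k = b σ ∧ a l = b τ then b σ * ((Lfun k l p) ^ 2 / (b σ - b τ)) else 0))
        = ∑ σ : Fin (ℓ + 1), ∑ τ : Fin (ℓ + 1), ∑ k : Fin (n + 1), ∑ l : Fin (n + 1),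
          (if τ ≠ σ ∧ a k = b σ ∧ a l = b τ then (Lfun k l p) ^ 2 else 0) := by
      nth_rewrite 2 [swap_pairs (f := fun s t k l =>
        if t ≠ s ∧ a k = b s ∧ a l = b t then b s * ((Lfun k l p) ^ 2 / (b s - b t)) else 0)]
      simp only [← Finset.sum_add_distrib]
      refine Finset.sum_congr rfl fun σ _ => Finset.sum_congr rfl fun τ _ =>
        Finset.sum_congr rfl fun k _ => Finset.sum_congr rfl fun l _ => ?_
      by_cases h : τ ≠ σ ∧ a k = b σ ∧ a l = b τ
      · rw [if_pos h, if_pos ⟨h.1.symm, h.2.2, h.2.1⟩, if_pos h]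
        have hL : Lfun l k p = -Lfun k l p := by simp only [Lfun]; ring
        have hne : b σ - b τ ≠ 0 := sub_ne_zero.mpr fun he => h.1 (hbinj he).symm
        have hne' : b τ - b σ ≠ 0 := fun he => hne (by linarith [sub_eq_zero.mp he])
        rw [hL, neg_sq]
        field_simp
        ring
      · rw [if_neg h, if_neg (fun h' => h ⟨h'.1.symm, h'.2.2, h'.2.1⟩), if_neg h, add_zero]
    have hD : (∑ σ : Fin (ℓ + 1), ∑ τ : Fin (ℓ + 1), ∑ k : Fin (n + 1), ∑ l : Fin (n + 1),
          (if τ ≠ σ ∧ a k = b σ ∧ a l = b τ then (Lfun k l p) ^ 2 else 0))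
        = ∑ k : Fin (n + 1), ∑ l : Fin (n + 1),
          (if a k ≠ a l then (Lfun k l p) ^ 2 else 0) := by
      rw [sum_comm4 (f := fun (σ τ : Fin (ℓ + 1)) (k l : Fin (n + 1)) =>
        if τ ≠ σ ∧ a k = b σ ∧ a l = b τ then (Lfun k l p) ^ 2 else 0)]
      refine Finset.sum_congr rfl fun k _ => Finset.sum_congr rfl fun l _ => ?_
      obtain ⟨σk, hk⟩ := hab k
      obtain ⟨τl, hl⟩ := hab l
      rw [Finset.sum_eq_single σk]
      · rw [Finset.sum_eq_single τl]
        · by_cases h : a k = a l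
          · have hts : τl = σk := hbinj (hl.symm.trans (h.symm.trans hk))
            simp [hts, h]
          · have hne : τl ≠ σk := fun hc => h (by rw [hk, hl, hc])
            rw [if_pos ⟨hne, hk, hl⟩, if_pos h]
        · intro τ _ hτ
          rw [if_neg]
          rintro ⟨-, -, hlτ⟩
          exact hτ (hbinj (hl.symm.trans hlτ)).symm
        · intro h; exact absurd (Finset.mem_univ τl) h
      · intro σ _ hσ
        apply Finset.sum_eq_zero
        intro τ _
        rw [if_neg]
        rintro ⟨-, hkσ, -⟩
        exact hσ (hbinj (hk.symm.trans hkσ)).symm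
      · intro h; exact absurd (Finset.mem_univ σk) h
    have hSW : (∑ σ, Wfun a b σ p)
        = ∑ i : Fin (n + 1), ∑ k : Fin (n + 1),
            (if a i = a k ∧ i < k then (Lfun i k p) ^ 2 else 0) := by
      simp only [Wfun]
      rw [sum_comm3 (f := fun (σ : Fin (ℓ + 1)) (i k : Fin (n + 1)) =>
        if a i = b σ ∧ a k = b σ ∧ i < k then (Lfun i k p) ^ 2 else 0)]
      refine Finset.sum_congr rfl fun i _ => Finset.sum_congr rfl fun k _ => ?_
      obtain ⟨σi, hi⟩ := hab i
      rw [Finset.sum_eq_single σi]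
      · by_cases h : a i = a k ∧ i < k
        · rw [if_pos ⟨hi, h.1.symm.trans hi, h.2⟩, if_pos h]
        · rw [if_neg, if_neg h]
          rintro ⟨h1, h2, h3⟩
          exact h ⟨h1.trans h2.symm, h3⟩
      · intro σ _ hσ
        rw [if_neg]
        rintro ⟨h1, -, -⟩
        exact hσ (hbinj (hi.symm.trans h1)).symm
      · intro h; exact absurd (Finset.mem_univ σi) h
    have h2SW : (∑ i : Fin (n + 1), ∑ k : Fin (n + 1),
          (if a i = a k ∧ i < k then (Lfun i k p) ^ 2 else 0))
        + (∑ i : Fin (n + 1), ∑ k : Fin (n + 1),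
          (if a i = a k ∧ i < k then (Lfun i k p) ^ 2 else 0))
        = ∑ i : Fin (n + 1), ∑ k : Fin (n + 1),
          (if a i = a k ∧ i ≠ k then (Lfun i k p) ^ 2 else 0) := by
      nth_rewrite 2 [Finset.sum_comm]
      simp only [← Finset.sum_add_distrib]
      refine Finset.sum_congr rfl fun i _ => Finset.sum_congr rfl fun k _ => ?_
      have hL : Lfun k i p = -Lfun i k p := by simp only [Lfun]; ring
      by_cases h : a i = a k
      · rcases lt_trichotomy i k with hlt | heq | hgt
        · rw [if_pos ⟨h, hlt⟩, if_neg (fun hc => absurd hc.2 (not_lt.mpr hlt.le)),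
            if_pos ⟨h, ne_of_lt hlt⟩, add_zero]
        · subst heq
          simp
        · rw [if_neg (fun hc => absurd hc.2 (not_lt.mpr hgt.le)), if_pos ⟨h.symm, hgt⟩,
            if_pos ⟨h, (ne_of_lt hgt).symm⟩, hL, neg_sq, zero_add]
      · rw [if_neg (fun hc => h hc.1), if_neg (fun hc => h hc.1.symm),
          if_neg (fun hc => h hc.1), add_zero]
    have hmerge : (∑ k : Fin (n + 1), ∑ l : Fin (n + 1),
          (if a k ≠ a l then (Lfun k l p) ^ 2 else 0))
        + (∑ k : Fin (n + 1), ∑ l : Fin (n + 1),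
          (if a k = a l ∧ k ≠ l then (Lfun k l p) ^ 2 else 0))
        = ∑ k : Fin (n + 1), ∑ l : Fin (n + 1), (Lfun k l p) ^ 2 := by
      simp only [← Finset.sum_add_distrib]
      refine Finset.sum_congr rfl fun k _ => Finset.sum_congr rfl fun l _ => ?_
      by_cases h : a k = a l
      · by_cases h2 : k = l
        · subst h2
          simp [Lfun]
        · simp [h, h2]
      · simp [h]
    have hlag : (∑ k : Fin (n + 1), ∑ l : Fin (n + 1), (Lfun k l p) ^ 2)
        = 2 * ∑ ν, (p.2 ν) ^ 2 := by
      have hYY : (∑ ν, p.2 ν * p.2 ν) = ∑ ν, (p.2 ν) ^ 2 :=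
        Finset.sum_congr rfl fun ν _ => (sq _).symm
      simp only [Lfun]
      rw [lagrange p.1 p.2, hX, hZ, hYY]
      ring
    have hbB : (∑ σ, b σ * (∑ τ : Fin (ℓ + 1), if τ ≠ σ then
        ∑ k : Fin (n + 1), ∑ l : Fin (n + 1),
          (if a k = b σ ∧ a l = b τ then (Lfun k l p) ^ 2 / (b σ - b τ) else 0) else 0))
        = ∑ σ : Fin (ℓ + 1), ∑ τ : Fin (ℓ + 1), ∑ k : Fin (n + 1), ∑ l : Fin (n + 1),
          (if τ ≠ σ ∧ a k = b σ ∧ a l = b τ then b σ * ((Lfun k l p) ^ 2 / (b σ - b τ)) else 0) :=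
      Finset.sum_congr rfl fun σ _ => hBnorm (b σ) p σ
    have hF : (∑ σ, b σ * Fint a b σ p)
        = (∑ ν, a ν * (p.1 ν) ^ 2)
          + ∑ σ : Fin (ℓ + 1), ∑ τ : Fin (ℓ + 1), ∑ k : Fin (n + 1), ∑ l : Fin (n + 1),
            (if τ ≠ σ ∧ a k = b σ ∧ a l = b τ then b σ * ((Lfun k l p) ^ 2 / (b σ - b τ)) else 0) := by
      simp only [Fint, mul_add]
      rw [Finset.sum_add_distrib, hbA, hbB]
    have hsplit : (∑ σ, (b σ * Fint a b σ p + Wfun a b σ p))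
        = (∑ σ, b σ * Fint a b σ p) + ∑ σ, Wfun a b σ p := Finset.sum_add_distrib
    simp only [neumannH]
    rw [hsplit, hF, hSW]
    linarith [h2C, hD, h2SW, hmerge, hlag]
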